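/- Let Z ∈ {0,1}^{n×k} be the assignment matrix of a partition ψ of {1,…,n} into k nonempty classes, let Q ∈ ℝ^{k×k} be orthonormal, and let X ∈ ℝ^{n×k} be any matrix all of whose rows are nonzero, with X̄ its row-normalized version (each row divided by its Euclidean norm). Then ‖X̄ − Z Q‖_F² ≤ 4 n₁ ‖X − Z (ZᵀZ)^{-1/2} Q‖_F², where n₁ = max_j (ZᵀZ)_{jj} is the size of the largest class. -/

import Mathlib

/-!
Row by row: the `i`-th row of `Z (ZᵀZ)^{-1/2} Q` is `y = n_{ψ i}^{-1/2} q` for a unit row `q`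
of `Q`, and the `i`-th row of `Z Q` is `q = y / ‖y‖`. Normalization satisfies
`‖x / ‖x‖ - y / ‖y‖‖ ≤ 2 ‖x - y‖ / ‖y‖`, and `1 / ‖y‖² = n_{ψ i} ≤ n₁`; summing the squares
over the rows gives the bound.
-/

open MeasureTheory ProbabilityTheory Matrix Finset

noncomputable section

/-- The set of all possible edges: subsets of `Fin n` of cardinality between `2` and `M`. -/
def edgeSet (n M : ℕ) : Finset (Finset (Fin n)) :=
  Finset.univ.filter fun ξ => 2 ≤ ξ.card ∧ ξ.card ≤ M

/-- Indicator vector of a possible edge. -/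
def aVec {n : ℕ} (ξ : Finset (Fin n)) : Fin n → ℝ := fun i => if i ∈ ξ then 1 else 0

/-- Degree vector associated with edge weights `w`. -/
def degOf (n M : ℕ) (w : Finset (Fin n) → ℝ) (i : Fin n) : ℝ :=
  ∑ ξ ∈ edgeSet n M, w ξ * aVec ξ i

/-- Weighted adjacency matrix `∑_ξ (w ξ/|ξ|) a_ξ a_ξᵀ`. -/
def adjOf (n M : ℕ) (w : Finset (Fin n) → ℝ) : Matrix (Fin n) (Fin n) ℝ :=
  Matrix.of fun i j => ∑ ξ ∈ edgeSet n M, (w ξ / (ξ.card : ℝ)) * (aVec ξ i * aVec ξ j)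

/-- Diagonal matrix with entries `(√ d_i)⁻¹`. -/
def invSqrtDiag {n : ℕ} (dv : Fin n → ℝ) : Matrix (Fin n) (Fin n) ℝ :=
  Matrix.diagonal fun i => (Real.sqrt (dv i))⁻¹

/-- Normalized hypergraph Laplacian associated with edge weights `w`. -/
def lapOf (n M : ℕ) (w : Finset (Fin n) → ℝ) : Matrix (Fin n) (Fin n) ℝ :=
  1 - invSqrtDiag (degOf n M w) * adjOf n M w * invSqrtDiag (degOf n M w)

/-- Minimum expected degree. -/
def dminOf (n M : ℕ) (p : Finset (Fin n) → ℝ) : ℝ := ⨅ i, degOf n M p i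

/-- Assignment matrix of a partition. -/
def assign {n k : ℕ} (ψ : Fin n → Fin k) : Matrix (Fin n) (Fin k) ℝ :=
  Matrix.of fun i c => if ψ i = c then 1 else 0

/-- Size of a class. -/
def clsSize {n k : ℕ} (ψ : Fin n → Fin k) (c : Fin k) : ℕ :=
  (Finset.univ.filter fun i => ψ i = c).card

/-- Largest class size `n₁`. -/
def maxClsSize {n k : ℕ} (ψ : Fin n → Fin k) : ℕ := Finset.univ.sup (clsSize ψ)

/-- Smallest class size `n_k`. -/
def minClsSize {n k : ℕ} (ψ : Fin n → Fin k) : ℕ := sInf (Set.range (clsSize ψ))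

/-- `(ZᵀZ)^{-1/2}` for the assignment matrix `Z`. -/
def invSqrtClsDiag {n k : ℕ} (ψ : Fin n → Fin k) : Matrix (Fin k) (Fin k) ℝ :=
  Matrix.diagonal fun c => (Real.sqrt (clsSize ψ c))⁻¹

/-- Smallest (real) eigenvalue of a matrix. -/
def lambdaMin {k : ℕ} (G : Matrix (Fin k) (Fin k) ℝ) : ℝ :=
  sInf {μ : ℝ | ∃ v : Fin k → ℝ, v ≠ 0 ∧ G.mulVec v = μ • v}

/-- The identifiability parameter `δ`. -/
def deltaParam {n k : ℕ} (M : ℕ) (ψ : Fin n → Fin k) (p : Finset (Fin n) → ℝ)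
    (G : Matrix (Fin k) (Fin k) ℝ) (J : Fin n → ℝ) : ℝ :=
  lambdaMin G * (⨅ i : Fin n, (clsSize ψ (ψ i) : ℝ) / degOf n M p i)
    - ⨆ i : Fin n, ⨆ j : Fin n, |J i / degOf n M p i - J j / degOf n M p j|

/-- Euclidean norm of a vector. -/
def vecNorm {m : Type*} [Fintype m] (v : m → ℝ) : ℝ := Real.sqrt (∑ i, v i ^ 2)

/-- Frobenius norm of a matrix. -/
def frobNorm {m l : Type*} [Fintype m] [Fintype l] (A : Matrix m l ℝ) : ℝ :=
  Real.sqrt (∑ i, ∑ j, A i j ^ 2)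

/-- Spectral norm of a square matrix. -/
def specNorm {n : ℕ} (A : Matrix (Fin n) (Fin n) ℝ) : ℝ :=
  sSup {c : ℝ | ∃ v : Fin n → ℝ, vecNorm v ≤ 1 ∧ c = vecNorm (A.mulVec v)}

/-- Row-normalized version of a matrix. -/
def rowNormalize {n k : ℕ} (X : Matrix (Fin n) (Fin k) ℝ) : Matrix (Fin n) (Fin k) ℝ :=
  Matrix.of fun i j => X i j / vecNorm (X i)

/-- `X` is a matrix of `k` leading orthonormal eigenvectors of `L`: its columns are
orthonormal eigenvectors, and every eigenvector orthogonal to them has a larger eigenvalue. -/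
def LeadingEigvecs {n k : ℕ} (L : Matrix (Fin n) (Fin n) ℝ)
    (X : Matrix (Fin n) (Fin k) ℝ) : Prop :=
  Xᵀ * X = 1 ∧ ∃ Λ : Fin k → ℝ, L * X = X * Matrix.diagonal Λ ∧
    ∀ (μ : ℝ) (v : Fin n → ℝ), v ≠ 0 → L.mulVec v = μ • v → Xᵀ.mulVec v = 0 → ∀ a, Λ a ≤ μ

/-- Membership in `𝓜_{n×k}(r)`: at most `r` distinct rows. -/
def hasAtMostRows {n k : ℕ} (r : ℕ) (S : Matrix (Fin n) (Fin k) ℝ) : Prop :=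
  (Set.range fun i : Fin n => S i).ncard ≤ r

/-- The `k`-means objective `η_r(X) = min_{S ∈ 𝓜(r)} ‖X - S‖_F`. -/
def kmeansObj {n k : ℕ} (r : ℕ) (X : Matrix (Fin n) (Fin k) ℝ) : ℝ :=
  sInf {c : ℝ | ∃ S : Matrix (Fin n) (Fin k) ℝ, hasAtMostRows r S ∧ c = frobNorm (X - S)}

/-- Number of misclassified nodes, minimized over label permutations. -/
def errCount {n k : ℕ} (ψ ψ' : Fin n → Fin k) : ℕ :=
  sInf {m : ℕ | ∃ σ : Equiv.Perm (Fin k),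
    m = (Finset.univ.filter fun i => ψ i ≠ σ (ψ' i)).card}

lemma norm_inv_norm_smul_sub_inv_norm_smul_le {E : Type*} [NormedAddCommGroup E]
    [NormedSpace ℝ E] (x : E) {y : E} (hy : y ≠ 0) :
    ‖‖x‖⁻¹ • x - ‖y‖⁻¹ • y‖ ≤ 2 * ‖x - y‖ / ‖y‖ := by
  have hy' : 0 < ‖y‖ := norm_pos_iff.mpr hy
  have hscale : |‖x‖⁻¹ - ‖y‖⁻¹| * ‖x‖ ≤ ‖x - y‖ / ‖y‖ := by
    rcases eq_or_ne x 0 with rfl | hx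
    · simp only [norm_zero, mul_zero]; positivity
    have hx' : 0 < ‖x‖ := norm_pos_iff.mpr hx
    calc |‖x‖⁻¹ - ‖y‖⁻¹| * ‖x‖ = |(‖x‖⁻¹ - ‖y‖⁻¹) * ‖x‖| := by rw [abs_mul, abs_of_pos hx']
      _ = |‖y‖ - ‖x‖| / ‖y‖ := by
          rw [show (‖x‖⁻¹ - ‖y‖⁻¹) * ‖x‖ = (‖y‖ - ‖x‖) / ‖y‖ by field_simp, abs_div,
            abs_of_pos hy']
      _ ≤ ‖x - y‖ / ‖y‖ := by gcongr; rw [norm_sub_rev]; exact abs_norm_sub_norm_le y x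
  calc ‖‖x‖⁻¹ • x - ‖y‖⁻¹ • y‖ = ‖‖y‖⁻¹ • (x - y) + (‖x‖⁻¹ - ‖y‖⁻¹) • x‖ := by
        rw [smul_sub, sub_smul]; abel_nf
    _ ≤ ‖y‖⁻¹ * ‖x - y‖ + |‖x‖⁻¹ - ‖y‖⁻¹| * ‖x‖ := by
        grw [norm_add_le, norm_smul, norm_smul, Real.norm_of_nonneg (inv_nonneg.2 hy'.le),
          Real.norm_eq_abs]
    _ ≤ ‖y‖⁻¹ * ‖x - y‖ + ‖x - y‖ / ‖y‖ := by gcongr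
    _ = 2 * ‖x - y‖ / ‖y‖ := by ring

lemma norm_inv_norm_smul_sub_sq_le {E : Type*} [NormedAddCommGroup E]
    [NormedSpace ℝ E] (x : E) {q : E} (hq : ‖q‖ = 1) {s : ℝ} (hs : 0 < s) :
    ‖‖x‖⁻¹ • x - q‖ ^ 2 ≤ 4 * s * ‖x - (√s)⁻¹ • q‖ ^ 2 := by
  have hc : ‖(√s)⁻¹ • q‖ = (√s)⁻¹ := by
    rw [norm_smul, hq, mul_one, Real.norm_of_nonneg (by positivity)]
  have hunit : ‖(√s)⁻¹ • q‖⁻¹ • (√s)⁻¹ • q = q := by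
    rw [hc, inv_smul_smul₀ (by positivity)]
  have hne : (√s)⁻¹ • q ≠ 0 := norm_ne_zero_iff.mp (by rw [hc]; positivity)
  have key := norm_inv_norm_smul_sub_inv_norm_smul_le x hne
  rw [hunit, hc, div_inv_eq_mul] at key
  calc ‖‖x‖⁻¹ • x - q‖ ^ 2 ≤ (2 * ‖x - (√s)⁻¹ • q‖ * √s) ^ 2 := by gcongr
    _ = 4 * s * ‖x - (√s)⁻¹ • q‖ ^ 2 := by rw [mul_pow, mul_pow, Real.sq_sqrt hs.le]; ring

section Rows

variable {m l : Type*} [Fintype m] [Fintype l]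

lemma vecNorm_eq_norm_toLp (v : m → ℝ) : vecNorm v = ‖WithLp.toLp 2 v‖ := by
  simp only [vecNorm, EuclideanSpace.norm_eq, Real.norm_eq_abs, sq_abs]

lemma vecNorm_inv_smul_sub_sq_le (x : m → ℝ) {q : m → ℝ} (hq : vecNorm q = 1) {s : ℝ}
    (hs : 0 < s) :
    vecNorm ((vecNorm x)⁻¹ • x - q) ^ 2 ≤ 4 * s * vecNorm (x - (√s)⁻¹ • q) ^ 2 := by
  rw [vecNorm_eq_norm_toLp] at hq
  simpa only [vecNorm_eq_norm_toLp, WithLp.toLp_sub, WithLp.toLp_smul]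
    using norm_inv_norm_smul_sub_sq_le (WithLp.toLp 2 x) hq hs

lemma frobNorm_sub_sq (A B : Matrix m l ℝ) :
    frobNorm (A - B) ^ 2 = ∑ i, vecNorm (A i - B i) ^ 2 := by
  simp only [frobNorm, vecNorm]
  rw [Real.sq_sqrt (by positivity)]
  exact Finset.sum_congr rfl fun i _ => (Real.sq_sqrt (by positivity)).symm

end Rows

lemma vecNorm_row_eq_one {m l : Type*} [Fintype l] [DecidableEq m] {Q : Matrix m l ℝ}
    (hQ : Q * Qᵀ = 1) (c : m) : vecNorm (Q c) = 1 := by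
  have hc := congrFun (congrFun hQ c) c
  simp only [mul_apply, transpose_apply, one_apply_eq] at hc
  simp only [vecNorm, sq, hc, Real.sqrt_one]

lemma rowNormalize_row {n k : ℕ} (X : Matrix (Fin n) (Fin k) ℝ) (i : Fin n) :
    rowNormalize X i = (vecNorm (X i))⁻¹ • X i := by
  ext j; simp [rowNormalize, div_eq_inv_mul]

lemma assign_mul_row {n k : ℕ} {l : Type*} (ψ : Fin n → Fin k) (A : Matrix (Fin k) l ℝ)
    (i : Fin n) : (assign ψ * A) i = A (ψ i) := by
  ext j; simp [mul_apply, assign]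

lemma invSqrtClsDiag_mul_row {n k : ℕ} {l : Type*} (ψ : Fin n → Fin k) (A : Matrix (Fin k) l ℝ)
    (c : Fin k) : (invSqrtClsDiag ψ * A) c = (√(clsSize ψ c))⁻¹ • A c := by
  ext j; simp [invSqrtClsDiag, diagonal_mul]

lemma clsSize_pos {n k : ℕ} (ψ : Fin n → Fin k) (i : Fin n) : 0 < clsSize ψ (ψ i) :=
  Finset.card_pos.mpr ⟨i, Finset.mem_filter.mpr ⟨Finset.mem_univ i, rfl⟩⟩

lemma clsSize_le_maxClsSize {n k : ℕ} (ψ : Fin n → Fin k) (c : Fin k) :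
    clsSize ψ c ≤ maxClsSize ψ :=
  Finset.le_sup (Finset.mem_univ c)

theorem rowNormalize_perturbation_general
    (n k : ℕ) (ψ : Fin n → Fin k)
    (Q : Matrix (Fin k) (Fin k) ℝ) (hQ' : Q * Qᵀ = 1)
    (X : Matrix (Fin n) (Fin k) ℝ) :
    frobNorm (rowNormalize X - assign ψ * Q) ^ 2 ≤
      4 * (maxClsSize ψ : ℝ) *
        frobNorm (X - assign ψ * invSqrtClsDiag ψ * Q) ^ 2 := by
  rw [frobNorm_sub_sq, frobNorm_sub_sq, Finset.mul_sum]
  refine Finset.sum_le_sum fun i _ => ?_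
  rw [rowNormalize_row, assign_mul_row, Matrix.mul_assoc, assign_mul_row, invSqrtClsDiag_mul_row]
  calc vecNorm ((vecNorm (X i))⁻¹ • X i - Q (ψ i)) ^ 2
      ≤ 4 * (clsSize ψ (ψ i) : ℝ) * vecNorm (X i - (√(clsSize ψ (ψ i)))⁻¹ • Q (ψ i)) ^ 2 :=
        vecNorm_inv_smul_sub_sq_le _ (vecNorm_row_eq_one hQ' _) (by exact_mod_cast clsSize_pos ψ i)
    _ ≤ 4 * (maxClsSize ψ : ℝ) * vecNorm (X i - (√(clsSize ψ (ψ i)))⁻¹ • Q (ψ i)) ^ 2 := by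
        gcongr; exact_mod_cast clsSize_le_maxClsSize ψ _

/-- Row-normalization perturbation: for an assignment matrix `Z` of a partition with nonempty
classes, an orthonormal `Q`, and any `X` with nonzero rows,
`‖X̄ - Z Q‖_F² ≤ 4 n₁ ‖X - Z (ZᵀZ)^{-1/2} Q‖_F²` where `n₁` is the largest class size. -/
theorem rowNormalize_perturbation
    (n k : ℕ) (ψ : Fin n → Fin k) (hsurj : Function.Surjective ψ)
    (Q : Matrix (Fin k) (Fin k) ℝ) (hQ : Qᵀ * Q = 1) (hQ' : Q * Qᵀ = 1)
    (X : Matrix (Fin n) (Fin k) ℝ) (hX : ∀ i, X i ≠ 0) :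
    frobNorm (rowNormalize X - assign ψ * Q) ^ 2 ≤
      4 * (maxClsSize ψ : ℝ) *
        frobNorm (X - assign ψ * invSqrtClsDiag ψ * Q) ^ 2 :=
  rowNormalize_perturbation_general n k ψ Q hQ' X

end
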